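/- Let n ≥ 2 and let F be a family of (n−1)-element subsets of [n]. Define the complementary singleton family F* = { {r} : r ∈ [n], [n] ∖ {r} ∉ F }. Then Alice(F) holds if and only if Bob(F*) does not hold. -/

import Mathlib

/-- The board `[n] = {1, …, n}` as a finite set of natural numbers. -/
def board (n : ℕ) : Finset ℕ := Finset.Icc 1 n

/-- The order-preserving relabelling of `[n] \ {x}` onto `[n-1]`:
elements below `x` are unchanged, elements above `x` drop by one. -/
def stdElt (x r : ℕ) : ℕ := if r < x then r else r - 1

/-- Standardise a set avoiding `x`: relabel it via `stdElt x`. -/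
def stdSet (x : ℕ) (S : Finset ℕ) : Finset ℕ := S.image (stdElt x)

/-- The standardised section `F_x^+ = { S \ {x} : x ∈ S ∈ F }`,
viewed as a family of subsets of `[n-1]`. -/
def secPlus (F : Set (Finset ℕ)) (x : ℕ) : Set (Finset ℕ) :=
  {T | ∃ S ∈ F, x ∈ S ∧ T = stdSet x (S.erase x)}

/-- The standardised section `F_x^- = { S ∈ F : x ∉ S }`,
viewed as a family of subsets of `[n-1]`. -/
def secMinus (F : Set (Finset ℕ)) (x : ℕ) : Set (Finset ℕ) :=
  {T | ∃ S ∈ F, x ∉ S ∧ T = stdSet x S}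

mutual
  /-- `AliceWins n k F`: Alice wins her `F`-game, where `F` is a family of
  `k`-subsets of `[n]`.  Terminal games (`k = 0` or `k = n`) are won iff `F`
  is nonempty; otherwise Alice needs a first offer `x` such that Bob wins both
  his `F_x^+`-game and his `F_x^-`-game. -/
  def AliceWins (n k : ℕ) (F : Set (Finset ℕ)) : Prop :=
    if h : k = 0 ∨ n ≤ k then F.Nonempty
    else ∃ x ∈ board n,
      BobWins (n - 1) (k - 1) (secPlus F x) ∧ BobWins (n - 1) k (secMinus F x)
  termination_by n
  decreasing_by all_goals omega

  /-- `BobWins n k F`: Bob wins his `F`-game, where `F` is a family of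
  `k`-subsets of `[n]`.  Terminal games (`k = 0` or `k = n`) are won iff `F`
  is nonempty; otherwise Bob needs, for every first offer `x`, that Alice wins
  her `F_x^+`-game or her `F_x^-`-game. -/
  def BobWins (n k : ℕ) (F : Set (Finset ℕ)) : Prop :=
    if h : k = 0 ∨ n ≤ k then F.Nonempty
    else ∀ x ∈ board n,
      AliceWins (n - 1) (k - 1) (secPlus F x) ∨ AliceWins (n - 1) k (secMinus F x)
  termination_by n
  decreasing_by all_goals omega
end

/-- `S ⪯ T` in the pointwise order: the increasing enumerations of `S` and `T`
have the same length and are pointwise `≤`. -/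
def PointwiseLE (S T : Finset ℕ) : Prop :=
  List.Forall₂ (· ≤ ·) (S.sort (· ≤ ·)) (T.sort (· ≤ ·))

/-- `F` consists of `k`-element subsets of `[n]`. -/
def IsFamilyOn (n k : ℕ) (F : Set (Finset ℕ)) : Prop :=
  ∀ S ∈ F, S ⊆ board n ∧ S.card = k

/-- `F` is pointwise-increasing as a family of `k`-subsets of `[n]`:
it is upwards closed in the pointwise order. -/
def IsIncreasingFamily (n k : ℕ) (F : Set (Finset ℕ)) : Prop :=
  ∀ S T : Finset ℕ, S ∈ F → T ⊆ board n → T.card = k → PointwiseLE S T → T ∈ F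

/-!
Both games are decided after a single offer. In the `F`-game on `(n-1)`-sets, once `x` is
offered the section `F_x^-` is a terminal game, won iff `[n] ∖ {x} ∈ F`; in the `F*`-game on
singletons the section `(F*)_x^+` is terminal, won iff `[n] ∖ {x} ∉ F`, while `(F*)_x^-` is
the complementary singleton family of `F_x^+`. Hence `Alice(F) ↔ ¬ Bob(F*)` and
`Bob(F) ↔ ¬ Alice(F*)` follow together by induction on `n`.
-/

lemma aliceWins_iff_nonempty {n k : ℕ} (h : k = 0 ∨ n ≤ k) (F : Set (Finset ℕ)) :
    AliceWins n k F ↔ F.Nonempty := by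
  rw [AliceWins, dif_pos h]

lemma bobWins_iff_nonempty {n k : ℕ} (h : k = 0 ∨ n ≤ k) (F : Set (Finset ℕ)) :
    BobWins n k F ↔ F.Nonempty := by
  rw [BobWins, dif_pos h]

lemma aliceWins_iff_exists {n k : ℕ} (h : ¬(k = 0 ∨ n ≤ k)) (F : Set (Finset ℕ)) :
    AliceWins n k F ↔ ∃ x ∈ board n,
      BobWins (n - 1) (k - 1) (secPlus F x) ∧ BobWins (n - 1) k (secMinus F x) := by
  rw [AliceWins, dif_neg h]

lemma bobWins_iff_forall {n k : ℕ} (h : ¬(k = 0 ∨ n ≤ k)) (F : Set (Finset ℕ)) :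
    BobWins n k F ↔ ∀ x ∈ board n,
      AliceWins (n - 1) (k - 1) (secPlus F x) ∨ AliceWins (n - 1) k (secMinus F x) := by
  rw [BobWins, dif_neg h]

lemma mem_board {n r : ℕ} : r ∈ board n ↔ 1 ≤ r ∧ r ≤ n := Finset.mem_Icc

lemma card_board (n : ℕ) : (board n).card = n := by
  simp [board]

section Standardisation

variable {n x : ℕ}

lemma stdElt_injOn (x : ℕ) : Set.InjOn (stdElt x) {x}ᶜ := by
  intro a ha b hb h
  simp only [Set.mem_compl_singleton_iff] at ha hb
  unfold stdElt at h
  split_ifs at h <;> omega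

lemma stdElt_bijOn (hx : x ∈ board (n + 1)) :
    Set.BijOn (stdElt x) ((board (n + 1)).erase x) (board n) := by
  rw [mem_board] at hx
  refine ⟨fun r hr => ?_, (stdElt_injOn x).mono fun r hr => (Finset.mem_erase.1 hr).1,
    fun s hs => ?_⟩
  · obtain ⟨hrx, hr⟩ := Finset.mem_erase.1 hr
    rw [mem_board] at hr
    simp only [Finset.mem_coe, mem_board, stdElt]
    split_ifs <;> omega
  · rw [Finset.mem_coe, mem_board] at hs
    -- the inverse relabelling `[n] → [n+1] ∖ {x}`
    refine ⟨if s < x then s else s + 1, ?_, ?_⟩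
    · simp only [Finset.mem_coe, Finset.mem_erase, mem_board]
      split_ifs <;> omega
    · simp only [stdElt]
      split_ifs <;> omega

lemma card_stdSet {S : Finset ℕ} (hx : x ∉ S) : (stdSet x S).card = S.card :=
  Finset.card_image_of_injOn <| (stdElt_injOn x).mono fun a ha (h : a = x) => hx (h ▸ ha)

lemma stdSet_injective_of_notMem {S T : Finset ℕ} (hS : x ∉ S) (hT : x ∉ T)
    (h : stdSet x S = stdSet x T) : S = T := by
  have hsub : ∀ A : Finset ℕ, x ∉ A → (A : Set ℕ) ⊆ {x}ᶜ := fun A hA a ha (h : a = x) => hA (h ▸ ha)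
  rw [← Finset.coe_inj] at h ⊢
  simpa only [stdSet, Finset.coe_image,
    (stdElt_injOn x).image_eq_image_iff (hsub S hS) (hsub T hT)] using h

lemma stdSet_board_erase (hx : x ∈ board (n + 1)) :
    stdSet x ((board (n + 1)).erase x) = board n := by
  rw [← Finset.coe_inj, stdSet, Finset.coe_image]
  exact (stdElt_bijOn hx).image_eq

lemma stdSet_erase {r : ℕ} {A : Finset ℕ} (hA : x ∉ A) (hr : r ≠ x) :
    stdSet x (A.erase r) = (stdSet x A).erase (stdElt x r) := by
  ext m
  simp only [stdSet, Finset.mem_image, Finset.mem_erase]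
  constructor
  · rintro ⟨a, ⟨har, haA⟩, rfl⟩
    exact ⟨fun h => har (stdElt_injOn x (fun e => hA (e ▸ haA)) hr h), a, haA, rfl⟩
  · rintro ⟨hm, a, haA, rfl⟩
    exact ⟨a, ⟨fun e => hm (e ▸ rfl), haA⟩, rfl⟩

end Standardisation

def starFamily (n : ℕ) (F : Set (Finset ℕ)) : Set (Finset ℕ) :=
  {S : Finset ℕ | ∃ r ∈ board n, (board n).erase r ∉ F ∧ S = {r}}

section Sections

variable {n x : ℕ} {F : Set (Finset ℕ)}

lemma IsFamilyOn.secPlus {k : ℕ} (hF : IsFamilyOn (n + 1) k F) (hx : x ∈ board (n + 1)) :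
    IsFamilyOn n (k - 1) (secPlus F x) := by
  rintro T ⟨S, hS, hxS, rfl⟩
  obtain ⟨hsub, hcard⟩ := hF S hS
  refine ⟨?_, ?_⟩
  · rw [← stdSet_board_erase hx]
    exact Finset.image_subset_image (Finset.erase_subset_erase x hsub)
  · rw [card_stdSet (Finset.notMem_erase x S), Finset.card_erase_of_mem hxS, hcard]

lemma secMinus_nonempty_iff (hF : IsFamilyOn (n + 1) n F) (hx : x ∈ board (n + 1)) :
    (secMinus F x).Nonempty ↔ (board (n + 1)).erase x ∈ F := by
  refine ⟨?_, fun h => ⟨_, _, h, Finset.notMem_erase x _, rfl⟩⟩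
  rintro ⟨T, S, hS, hxS, rfl⟩
  obtain ⟨hsub, hcard⟩ := hF S hS
  have hS_eq : S = (board (n + 1)).erase x := by
    apply Finset.eq_of_subset_of_card_le (Finset.subset_erase.2 ⟨hsub, hxS⟩)
    rw [Finset.card_erase_of_mem hx, card_board, hcard]
    rfl
  exact hS_eq ▸ hS

lemma secPlus_starFamily_nonempty_iff (hx : x ∈ board n) :
    (secPlus (starFamily n F) x).Nonempty ↔ (board n).erase x ∉ F := by
  constructor
  · rintro ⟨T, S, ⟨r, -, hrF, rfl⟩, hxS, rfl⟩
    rwa [Finset.mem_singleton.1 hxS]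
  · intro h
    exact ⟨_, {x}, ⟨x, hx, h, rfl⟩, Finset.mem_singleton_self x, rfl⟩

lemma erase_stdElt_mem_secPlus_iff {r : ℕ} (hx : x ∈ board (n + 1)) (hrx : r ≠ x) :
    (board n).erase (stdElt x r) ∈ secPlus F x ↔ (board (n + 1)).erase r ∈ F := by
  have hx_mem : x ∈ (board (n + 1)).erase r := Finset.mem_erase.2 ⟨hrx.symm, hx⟩
  have hstd : stdSet x (((board (n + 1)).erase r).erase x) = (board n).erase (stdElt x r) := by
    rw [Finset.erase_right_comm, stdSet_erase (Finset.notMem_erase x _) hrx,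
      stdSet_board_erase hx]
  refine ⟨?_, fun h => ⟨_, h, hx_mem, hstd.symm⟩⟩
  rintro ⟨S, hS, hxS, hS_std⟩
  have hS_erase : S.erase x = ((board (n + 1)).erase r).erase x :=
    stdSet_injective_of_notMem (Finset.notMem_erase x S) (Finset.notMem_erase x _)
      (hS_std ▸ hstd.symm)
  rwa [← Finset.insert_erase hxS, hS_erase, Finset.insert_erase hx_mem] at hS

lemma starFamily_secPlus (hx : x ∈ board (n + 1)) :
    starFamily n (secPlus F x) = secMinus (starFamily (n + 1) F) x := by
  ext T
  constructor
  · rintro ⟨s, hs, hsF, rfl⟩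
    obtain ⟨r, hr, rfl⟩ := (stdElt_bijOn hx).surjOn hs
    obtain ⟨hrx, hr⟩ := Finset.mem_erase.1 hr
    refine ⟨{r}, ⟨r, hr, fun h => hsF ((erase_stdElt_mem_secPlus_iff hx hrx).2 h), rfl⟩,
      by simpa using hrx.symm, by rw [stdSet, Finset.image_singleton]⟩
  · rintro ⟨S, ⟨r, hr, hrF, rfl⟩, hxS, rfl⟩
    have hrx : r ≠ x := fun h => hxS (h ▸ Finset.mem_singleton_self r)
    refine ⟨stdElt x r, (stdElt_bijOn hx).mapsTo (Finset.mem_erase.2 ⟨hrx, hr⟩),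
      fun h => hrF ((erase_stdElt_mem_secPlus_iff hx hrx).1 h), ?_⟩
    rw [stdSet, Finset.image_singleton]

lemma aliceWins_coatoms_iff (hn : 1 ≤ n) (hF : IsFamilyOn (n + 1) n F) :
    AliceWins (n + 1) n F ↔ ∃ x ∈ board (n + 1),
      BobWins n (n - 1) (secPlus F x) ∧ (board (n + 1)).erase x ∈ F := by
  rw [aliceWins_iff_exists (by omega)]
  refine exists_congr fun x => and_congr_right fun hx => and_congr_right fun _ => ?_
  rw [← secMinus_nonempty_iff hF hx]
  exact bobWins_iff_nonempty (Or.inr le_rfl) _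

lemma bobWins_coatoms_iff (hn : 1 ≤ n) (hF : IsFamilyOn (n + 1) n F) :
    BobWins (n + 1) n F ↔ ∀ x ∈ board (n + 1),
      AliceWins n (n - 1) (secPlus F x) ∨ (board (n + 1)).erase x ∈ F := by
  rw [bobWins_iff_forall (by omega)]
  refine forall_congr' fun x => forall_congr' fun hx => or_congr_right ?_
  rw [← secMinus_nonempty_iff hF hx]
  exact aliceWins_iff_nonempty (Or.inr le_rfl) _

lemma aliceWins_starFamily_iff (hn : 1 ≤ n) :
    AliceWins (n + 1) 1 (starFamily (n + 1) F) ↔ ∃ x ∈ board (n + 1),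
      (board (n + 1)).erase x ∉ F ∧ BobWins n 1 (starFamily n (secPlus F x)) := by
  rw [aliceWins_iff_exists (by omega)]
  refine exists_congr fun x => and_congr_right fun hx => ?_
  rw [bobWins_iff_nonempty (Or.inl rfl), secPlus_starFamily_nonempty_iff hx,
    starFamily_secPlus hx]
  rfl

lemma bobWins_starFamily_iff (hn : 1 ≤ n) :
    BobWins (n + 1) 1 (starFamily (n + 1) F) ↔ ∀ x ∈ board (n + 1),
      (board (n + 1)).erase x ∉ F ∨ AliceWins n 1 (starFamily n (secPlus F x)) := by
  rw [bobWins_iff_forall (by omega)]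
  refine forall_congr' fun x => forall_congr' fun hx => ?_
  rw [aliceWins_iff_nonempty (Or.inl rfl), secPlus_starFamily_nonempty_iff hx,
    starFamily_secPlus hx]
  rfl

end Sections

lemma coatom_duality_one {F : Set (Finset ℕ)} (hF : IsFamilyOn 1 0 F) :
    (AliceWins 1 0 F ↔ ¬ BobWins 1 1 (starFamily 1 F)) ∧
      (BobWins 1 0 F ↔ ¬ AliceWins 1 1 (starFamily 1 F)) := by
  have hF_nonempty : F.Nonempty ↔ ∅ ∈ F :=
    ⟨fun ⟨S, hS⟩ => Finset.card_eq_zero.1 (hF S hS).2 ▸ hS, fun h => ⟨∅, h⟩⟩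
  have hstar_nonempty : (starFamily 1 F).Nonempty ↔ ∅ ∉ F := by
    simp [starFamily, board, Set.Nonempty]
  rw [aliceWins_iff_nonempty (Or.inl rfl), bobWins_iff_nonempty (Or.inl rfl),
    aliceWins_iff_nonempty (Or.inr le_rfl), bobWins_iff_nonempty (Or.inr le_rfl),
    hF_nonempty, hstar_nonempty, not_not]
  exact ⟨Iff.rfl, Iff.rfl⟩

theorem coatom_duality {n : ℕ} (hn : 1 ≤ n) {F : Set (Finset ℕ)}
    (hF : IsFamilyOn n (n - 1) F) :
    (AliceWins n (n - 1) F ↔ ¬ BobWins n 1 (starFamily n F)) ∧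
      (BobWins n (n - 1) F ↔ ¬ AliceWins n 1 (starFamily n F)) := by
  induction n, hn using Nat.le_induction generalizing F with
  | base => exact coatom_duality_one hF
  | succ n hn ih =>
    simp only [Nat.add_sub_cancel] at hF ⊢
    have ih_plus : ∀ x ∈ board (n + 1), _ := fun x hx => ih (hF.secPlus hx)
    refine ⟨?_, ?_⟩
    · rw [aliceWins_coatoms_iff hn hF, bobWins_starFamily_iff hn]
      push Not
      refine exists_congr fun x => and_congr_right fun hx => ?_
      rw [(ih_plus x hx).2, and_comm]
    · rw [bobWins_coatoms_iff hn hF, aliceWins_starFamily_iff hn]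
      push Not
      refine forall_congr' fun x => forall_congr' fun hx => ?_
      rw [(ih_plus x hx).1, or_comm, or_iff_not_imp_left]

/-- for a family `F` of `(n-1)`-subsets of `[n]` and its
complementary singleton family `F* = { {r} : r ∈ [n], [n] \ {r} ∉ F }`,
Alice wins her `F`-game if and only if Bob does not win his `F*`-game. -/
theorem alice_iff_not_bob_complement (n : ℕ) (hn : 2 ≤ n) (F : Set (Finset ℕ))
    (hF : IsFamilyOn n (n - 1) F) :
    AliceWins n (n - 1) F ↔
      ¬ BobWins n 1
        {S : Finset ℕ | ∃ r ∈ board n, (board n).erase r ∉ F ∧ S = {r}} :=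
  (coatom_duality (by omega) hF).1
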